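/- Let U be a finite nonempty set, α > 0, u* ∈ U, and n ∈ ℕ. For each u ∈ U let T_u be a finite nonempty set of vectors in ℝ^n with nonnegative entries, and define Q(c, u) = min_{μ ∈ T_u} ⟪c, μ⟫ for c ∈ ℝ^n. Suppose that at c₀ ∈ ℝ^n the minimum defining Q(c₀, u) is attained at a unique μ*_u ∈ T_u for every u ∈ U. Then the loss L(c) = −log( exp(−Q(c, u*)/α) / Σ_{u ∈ U} exp(−Q(c, u)/α) ) is differentiable at c₀ with gradient ∇L(c₀) = (1/α) Σ_{u ∈ U} (𝟙{u = u*} − π(u))·μ*_u, where π(u) = exp(−Q(c₀, u)/α) / Σ_{u' ∈ U} exp(−Q(c₀, u')/α). -/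

import Mathlib

/-! Near `c₀` the strict minimizer `μ*_u` stays the minimizer, so `Q(·, u)` agrees with the linear
map `c ↦ ⟪c, μ*_u⟫` on a neighbourhood and has gradient `μ*_u` there. The loss is
`Q(c, u*)/α + log Σ_u exp(-Q(c, u)/α)`, and the chain rule turns the derivative of the
log-sum-exp into the Boltzmann average of these gradients. -/

open RealInnerProductSpace
open Filter Topology

theorem Finset.inf'_eventuallyEq_of_forall_lt {X ι β : Type*} [TopologicalSpace X] [LinearOrder β]
    [TopologicalSpace β] [OrderClosedTopology β] {s : Finset ι} (hs : s.Nonempty)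
    {f : ι → X → β} {x₀ : X} {i₀ : ι} (hi₀ : i₀ ∈ s) (hf : ∀ i ∈ s, ContinuousAt (f i) x₀)
    (hlt : ∀ i ∈ s, i ≠ i₀ → f i₀ x₀ < f i x₀) :
    (fun x => s.inf' hs (f · x)) =ᶠ[𝓝 x₀] f i₀ := by
  have hle : ∀ᶠ x in 𝓝 x₀, ∀ i ∈ s, f i₀ x ≤ f i x := by
    refine (eventually_all_finset s).2 fun i hi => ?_
    obtain rfl | hne := eq_or_ne i i₀
    · exact .of_forall fun _ => le_rfl
    · exact ((hf i₀ hi₀).eventually_lt (hf i hi) (hlt i hi hne)).mono fun _ h => h.le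
  filter_upwards [hle] with x hx
  exact le_antisymm (Finset.inf'_le _ hi₀) (Finset.le_inf' _ _ hx)

theorem hasGradientAt_inf'_inner {F : Type*} [NormedAddCommGroup F] [InnerProductSpace ℝ F]
    [CompleteSpace F] {s : Finset F} (hs : s.Nonempty) {c₀ μ : F} (hμ : μ ∈ s)
    (hlt : ∀ ν ∈ s, ν ≠ μ → ⟪c₀, μ⟫ < ⟪c₀, ν⟫) :
    HasGradientAt (fun c => s.inf' hs (fun ν => ⟪c, ν⟫)) μ c₀ := by
  have hinner : HasGradientAt (fun c => ⟪μ, c⟫) μ c₀ :=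
    hasGradientAt_iff_hasFDerivAt.2 (InnerProductSpace.toDual ℝ F μ).hasFDerivAt
  refine hinner.congr_of_eventuallyEq ?_
  simpa only [real_inner_comm μ] using
    Finset.inf'_eventuallyEq_of_forall_lt (f := fun ν c => ⟪c, ν⟫) hs hμ
      (fun _ _ => (continuous_id.inner continuous_const).continuousAt) hlt

section Boltzmann

variable {U : Type*} [Fintype U]

noncomputable def boltzmann (α : ℝ) (q : U → ℝ) (u : U) : ℝ :=
  Real.exp (-q u / α) / ∑ u', Real.exp (-q u' / α)

lemma sum_exp_neg_div_pos [Nonempty U] (α : ℝ) (q : U → ℝ) :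
    0 < ∑ u, Real.exp (-q u / α) :=
  Finset.sum_pos (fun _ _ => Real.exp_pos _) Finset.univ_nonempty

lemma neg_log_boltzmann [Nonempty U] (α : ℝ) (q : U → ℝ) (u : U) :
    -Real.log (boltzmann α q u) = q u / α + Real.log (∑ u', Real.exp (-q u' / α)) := by
  rw [boltzmann, Real.log_div (Real.exp_ne_zero _) (sum_exp_neg_div_pos α q).ne', Real.log_exp]
  ring

variable {E : Type*} [NormedAddCommGroup E] [NormedSpace ℝ E]
  {q : U → E → ℝ} {q' : U → StrongDual ℝ E} {c₀ : E}

lemma hasFDerivAt_log_sum_exp [Nonempty U] (α : ℝ) (hq : ∀ u, HasFDerivAt (q u) (q' u) c₀) :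
    HasFDerivAt (fun c => Real.log (∑ u, Real.exp (-q u c / α)))
      (-(1 / α) • ∑ u, boltzmann α (fun u => q u c₀) u • q' u) c₀ := by
  have hscore : ∀ u, HasFDerivAt (fun c => -q u c / α) (-(1 / α) • q' u) c₀ := fun u => by
    have h := (hq u).const_mul (-(1 / α))
    rwa [show (fun c => -(1 / α) * q u c) = fun c => -q u c / α from funext fun c => by ring] at h
  convert (HasFDerivAt.fun_sum fun u _ => (hscore u).exp).log
    (sum_exp_neg_div_pos α fun u => q u c₀).ne' using 1
  simp only [boltzmann, Finset.smul_sum, smul_smul, div_eq_inv_mul]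
  refine Finset.sum_congr rfl fun u _ => ?_
  congr 1
  ring

lemma hasFDerivAt_neg_log_boltzmann [Nonempty U] [DecidableEq U] (α : ℝ) (ustar : U)
    (hq : ∀ u, HasFDerivAt (q u) (q' u) c₀) :
    HasFDerivAt (fun c => -Real.log (boltzmann α (fun u => q u c) ustar))
      ((1 / α) • ∑ u, ((if u = ustar then (1 : ℝ) else 0) - boltzmann α (fun u => q u c₀) u)
        • q' u) c₀ := by
  simp only [neg_log_boltzmann]
  have h := ((hq ustar).const_mul (1 / α)).add (hasFDerivAt_log_sum_exp α hq)
  rw [show (fun c => 1 / α * q ustar c) = fun c => q ustar c / α from funext fun c => by ring] at h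
  refine h.congr_fderiv ?_
  ext x
  simp only [add_apply, smul_apply, sum_apply, smul_eq_mul, sub_mul, ite_mul, one_mul, zero_mul,
    Finset.sum_sub_distrib, Finset.sum_ite_eq', Finset.mem_univ, if_true, mul_sub]
  ring

end Boltzmann

theorem stmt_4_general {U : Type*} [Fintype U] [Nonempty U] [DecidableEq U]
    (α : ℝ) (ustar : U) (n : ℕ)
    (T : U → Finset (EuclideanSpace ℝ (Fin n)))
    (hT : ∀ u, (T u).Nonempty)
    (Q : EuclideanSpace ℝ (Fin n) → U → ℝ)
    (hQ : ∀ c u, Q c u = (T u).inf' (hT u) (fun μ => ⟪c, μ⟫))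
    (c₀ : EuclideanSpace ℝ (Fin n))
    (μstar : U → EuclideanSpace ℝ (Fin n))
    (hmem : ∀ u, μstar u ∈ T u)
    (hmin : ∀ u, ⟪c₀, μstar u⟫ = Q c₀ u)
    (huniq : ∀ u, ∀ μ ∈ T u, ⟪c₀, μ⟫ = Q c₀ u → μ = μstar u)
    (L : EuclideanSpace ℝ (Fin n) → ℝ)
    (hL : ∀ c, L c = -Real.log (Real.exp (-Q c ustar / α) / ∑ u, Real.exp (-Q c u / α)))
    (pol : U → ℝ)
    (hpol : ∀ u, pol u = Real.exp (-Q c₀ u / α) / ∑ u', Real.exp (-Q c₀ u' / α)) :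
    HasGradientAt L
      ((1 / α) • ∑ u, (((if u = ustar then (1 : ℝ) else 0) - pol u) • μstar u)) c₀ := by
  have hgrad : ∀ u, HasGradientAt (Q · u) (μstar u) c₀ := fun u => by
    have hstrict : ∀ ν ∈ T u, ν ≠ μstar u → ⟪c₀, μstar u⟫ < ⟪c₀, ν⟫ := fun ν hν hne => by
      have hle : Q c₀ u ≤ ⟪c₀, ν⟫ := (hQ c₀ u).trans_le (Finset.inf'_le _ hν)
      exact (hmin u).trans_lt (hle.lt_of_ne fun h => hne (huniq u ν hν h.symm))
    simpa only [hQ] using hasGradientAt_inf'_inner (hT u) (hmem u) hstrict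
  have hL' : L = fun c => -Real.log (boltzmann α (Q c) ustar) := funext hL
  have hpol' : pol = boltzmann α (Q c₀) := funext hpol
  rw [hL', hpol', hasGradientAt_iff_hasFDerivAt]
  simp only [map_smul, map_sum]
  exact hasFDerivAt_neg_log_boltzmann α ustar fun u => hasGradientAt_iff_hasFDerivAt.1 (hgrad u)

/-- Proposition 2 of the paper at a point of differentiability: the gradient of the
negative log-likelihood loss `L(c)` of the expert control `u*` under the Boltzmann
policy built from the piecewise-linear values `Q(c,u) = min_{μ ∈ T_u} ⟪c, μ⟫`,
assuming the minimizers `μ*_u` at `c₀` are unique. -/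
theorem stmt_4 {U : Type*} [Fintype U] [Nonempty U] [DecidableEq U]
    (α : ℝ) (hα : 0 < α) (ustar : U) (n : ℕ)
    (T : U → Finset (EuclideanSpace ℝ (Fin n)))
    (hT : ∀ u, (T u).Nonempty)
    (hTnonneg : ∀ u, ∀ μ ∈ T u, ∀ i, 0 ≤ μ i)
    (Q : EuclideanSpace ℝ (Fin n) → U → ℝ)
    (hQ : ∀ c u, Q c u = (T u).inf' (hT u) (fun μ => ⟪c, μ⟫))
    (c₀ : EuclideanSpace ℝ (Fin n))
    (μstar : U → EuclideanSpace ℝ (Fin n))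
    (hmem : ∀ u, μstar u ∈ T u)
    (hmin : ∀ u, ⟪c₀, μstar u⟫ = Q c₀ u)
    (huniq : ∀ u, ∀ μ ∈ T u, ⟪c₀, μ⟫ = Q c₀ u → μ = μstar u)
    (L : EuclideanSpace ℝ (Fin n) → ℝ)
    (hL : ∀ c, L c = -Real.log (Real.exp (-Q c ustar / α) / ∑ u, Real.exp (-Q c u / α)))
    (pol : U → ℝ)
    (hpol : ∀ u, pol u = Real.exp (-Q c₀ u / α) / ∑ u', Real.exp (-Q c₀ u' / α)) :
    HasGradientAt L
      ((1 / α) • ∑ u, (((if u = ustar then (1 : ℝ) else 0) - pol u) • μstar u)) c₀ :=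
  stmt_4_general α ustar n T hT Q hQ c₀ μstar hmem hmin huniq L hL pol hpol
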